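/- arXiv:1502.05089 — 4 statements merged into one kernel-verified Lean document; each statement's English description precedes it below -/
import Mathlib

section
/- Let G be a finite-dimensional Lie group and let L be a central extension of LG by U(1) equipped with a multiplicative fusion product λ and a thin homotopy equivariant structure d that is fusive with respect to λ. Let can : PG → L be the unique section along ♭ with λ(can_γ, can_γ) = can_γ. Then can is retraction-invariant: for every γ ∈ PG, every smoothing map φ, and every t ∈ [0,1], the flat loops ♭(γ) and ♭(φ_γ(t)) are thin homotopic, and can_{φ_γ(t)} = d_{♭(γ), ♭(φ_γ(t))}(can_γ). -/
open scoped Manifold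
open Function Set

noncomputable section

variable {E : Type*} [NormedAddCommGroup E] [NormedSpace ℝ E] [FiniteDimensional ℝ E]
variable {H : Type*} [TopologicalSpace H]

section Target
variable {E' : Type*} [NormedAddCommGroup E'] [NormedSpace ℝ E']
variable {H' : Type*} [TopologicalSpace H']
variable {M : Type*} [TopologicalSpace M] [ChartedSpace H' M]

/-- A smooth map `h : ℝ × ℝ → M`, 1-periodic in the second variable (modelling a map
`[0,1] × S¹ → M`), is a *thin homotopy* if its differential has rank at most `1` at every
point of `[0,1] × S¹`. -/
def IsThinHomotopy (I' : ModelWithCorners ℝ E' H') (h : ℝ × ℝ → M) : Prop :=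
  ContMDiff 𝓘(ℝ, ℝ × ℝ) I' (⊤ : ℕ∞) h ∧ (∀ t z, h (t, z + 1) = h (t, z)) ∧
  ∀ p : ℝ × ℝ, p.1 ∈ Set.Icc (0:ℝ) 1 →
    LinearMap.rank (mfderiv 𝓘(ℝ, ℝ × ℝ) I' h p).toLinearMap ≤ 1

/-- Two (smooth 1-periodic) loops `τ₀ τ₁ : ℝ → M` are *thin homotopic* if there is a thin
homotopy connecting them. -/
def ThinHomotopic (I' : ModelWithCorners ℝ E' H') (τ₀ τ₁ : ℝ → M) : Prop :=
  ∃ h : ℝ × ℝ → M, IsThinHomotopy I' h ∧ (∀ z, h (0, z) = τ₀ z) ∧ (∀ z, h (1, z) = τ₁ z)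

end Target

variable {G : Type*} [TopologicalSpace G] [ChartedSpace H G] [Group G]

/-- A smooth loop in `G`, modelled as a smooth 1-periodic map `ℝ → G`. -/
def IsSmoothLoop (I : ModelWithCorners ℝ E H) (f : ℝ → G) : Prop :=
  ContMDiff 𝓘(ℝ, ℝ) I (⊤ : ℕ∞) f ∧ Function.Periodic f 1

/-- A smooth path in `G` with sitting instants, modelled as a smooth map `ℝ → G` which is
constant near `(-∞, 0]` and near `[1, ∞)`. -/
def IsSmoothPath (I : ModelWithCorners ℝ E H) (γ : ℝ → G) : Prop :=
  ContMDiff 𝓘(ℝ, ℝ) I (⊤ : ℕ∞) γ ∧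
  ∃ ε > 0, (∀ s ≤ ε, γ s = γ 0) ∧ (∀ s, 1 - ε ≤ s → γ s = γ 1)

/-- Two paths share their initial point and their end point. -/
def SameEnds (γ₁ γ₂ : ℝ → G) : Prop := γ₁ 0 = γ₂ 0 ∧ γ₁ 1 = γ₂ 1

/-- `(γ₁, γ₂, γ₃) ∈ PG^{[3]}`. -/
def IsTriple (I : ModelWithCorners ℝ E H) (γ₁ γ₂ γ₃ : ℝ → G) : Prop :=
  IsSmoothPath I γ₁ ∧ IsSmoothPath I γ₂ ∧ IsSmoothPath I γ₃ ∧
    SameEnds γ₁ γ₂ ∧ SameEnds γ₂ γ₃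

/-- The loop `γ₁ ∪ γ₂` associated to a pair of paths with the same end points:
`(γ₁∪γ₂)(e^{2πit}) = γ₁(2t)` for `t ∈ [0,1/2]` and `= γ₂(2-2t)` for `t ∈ [1/2,1]`,
written as a 1-periodic function on `ℝ`. -/
def chordFn (γ₁ γ₂ : ℝ → G) : ℝ → G := fun t =>
  if Int.fract t ≤ 1 / 2 then γ₁ (2 * Int.fract t) else γ₂ (2 - 2 * Int.fract t)

/-- The reversed path. -/
def revP (γ : ℝ → G) : ℝ → G := fun s => γ (1 - s)

/-- The loop group `LG` of smooth 1-periodic maps `ℝ → G`. -/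
abbrev LoopGrp (I : ModelWithCorners ℝ E H) (G : Type*) [TopologicalSpace G]
    [ChartedSpace H G] : Type _ :=
  {f : ℝ → G // IsSmoothLoop I f}

variable (I : ModelWithCorners ℝ E H) [LieGroup I (⊤ : ℕ∞) G]

instance : Group (LoopGrp I G) where
  mul f g := ⟨f.1 * g.1, f.2.1.mul g.2.1, f.2.2.mul g.2.2⟩
  one := ⟨fun _ => 1, contMDiff_const, fun _ => rfl⟩
  inv f := ⟨fun t => (f.1 t)⁻¹, f.2.1.inv, fun x => congrArg Inv.inv (f.2.2 x)⟩
  mul_assoc a b c := Subtype.ext (mul_assoc a.1 b.1 c.1)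
  one_mul a := Subtype.ext (one_mul a.1)
  mul_one a := Subtype.ext (mul_one a.1)
  inv_mul_cancel a := Subtype.ext (inv_mul_cancel a.1)

variable {L : Type*} [Group L]

/-- A central extension `1 → U(1) → L → LG → 1` of the loop group `LG` by `U(1)`. -/
structure CentralExt (I : ModelWithCorners ℝ E H) (G : Type*) [TopologicalSpace G]
    [ChartedSpace H G] [Group G] [LieGroup I (⊤ : ℕ∞) G] (L : Type*) [Group L] where
  proj : L →* LoopGrp I G
  emb : Circle →* L
  proj_surjective : Function.Surjective proj
  emb_injective : Function.Injective emb
  mem_ker_iff : ∀ q : L, proj q = 1 ↔ q ∈ Set.range emb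
  central : ∀ (z : Circle) (q : L), emb z * q = q * emb z

variable {I}

/-- `q ∈ L` lies in the fibre over the loop with underlying function `f`. -/
def CentralExt.Over (ce : CentralExt I G L) (q : L) (f : ℝ → G) : Prop :=
  (ce.proj q).1 = f

/-- A fusion product on a central extension of `LG`. -/
structure FusionProduct (ce : CentralExt I G L) where
  fus : (ℝ → G) → (ℝ → G) → (ℝ → G) → L → L → L
  over' : ∀ γ₁ γ₂ γ₃ q₁₂ q₂₃, IsTriple I γ₁ γ₂ γ₃ →
    ce.Over q₁₂ (chordFn γ₁ γ₂) → ce.Over q₂₃ (chordFn γ₂ γ₃) →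
    ce.Over (fus γ₁ γ₂ γ₃ q₁₂ q₂₃) (chordFn γ₁ γ₃)
  act_left : ∀ γ₁ γ₂ γ₃ (z : Circle) q₁₂ q₂₃, IsTriple I γ₁ γ₂ γ₃ →
    ce.Over q₁₂ (chordFn γ₁ γ₂) → ce.Over q₂₃ (chordFn γ₂ γ₃) →
    fus γ₁ γ₂ γ₃ (ce.emb z * q₁₂) q₂₃ = ce.emb z * fus γ₁ γ₂ γ₃ q₁₂ q₂₃
  act_right : ∀ γ₁ γ₂ γ₃ (z : Circle) q₁₂ q₂₃, IsTriple I γ₁ γ₂ γ₃ →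
    ce.Over q₁₂ (chordFn γ₁ γ₂) → ce.Over q₂₃ (chordFn γ₂ γ₃) →
    fus γ₁ γ₂ γ₃ q₁₂ (ce.emb z * q₂₃) = ce.emb z * fus γ₁ γ₂ γ₃ q₁₂ q₂₃
  assoc : ∀ γ₁ γ₂ γ₃ γ₄ q₁₂ q₂₃ q₃₄,
    IsSmoothPath I γ₁ → IsSmoothPath I γ₂ → IsSmoothPath I γ₃ → IsSmoothPath I γ₄ →
    SameEnds γ₁ γ₂ → SameEnds γ₂ γ₃ → SameEnds γ₃ γ₄ →
    ce.Over q₁₂ (chordFn γ₁ γ₂) → ce.Over q₂₃ (chordFn γ₂ γ₃) → ce.Over q₃₄ (chordFn γ₃ γ₄) →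
    fus γ₁ γ₃ γ₄ (fus γ₁ γ₂ γ₃ q₁₂ q₂₃) q₃₄ = fus γ₁ γ₂ γ₄ q₁₂ (fus γ₂ γ₃ γ₄ q₂₃ q₃₄)

/-- A fusion product is multiplicative if it is a "homomorphism" for the group structures. -/
def FusionProduct.Multiplicative {ce : CentralExt I G L} (lam : FusionProduct ce) : Prop :=
  ∀ γ₁ γ₂ γ₃ γ₁' γ₂' γ₃' q₁₂ q₂₃ q₁₂' q₂₃',
    IsTriple I γ₁ γ₂ γ₃ → IsTriple I γ₁' γ₂' γ₃' →
    ce.Over q₁₂ (chordFn γ₁ γ₂) → ce.Over q₂₃ (chordFn γ₂ γ₃) →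
    ce.Over q₁₂' (chordFn γ₁' γ₂') → ce.Over q₂₃' (chordFn γ₂' γ₃') →
    lam.fus γ₁ γ₂ γ₃ q₁₂ q₂₃ * lam.fus γ₁' γ₂' γ₃' q₁₂' q₂₃' =
      lam.fus (γ₁ * γ₁') (γ₂ * γ₂') (γ₃ * γ₃') (q₁₂ * q₁₂') (q₂₃ * q₂₃')

/-- A thin homotopy equivariant structure on a central extension of `LG`. -/
structure ThinStructure (ce : CentralExt I G L) where
  d : (ℝ → G) → (ℝ → G) → L → L
  over' : ∀ τ₀ τ₁ q, ThinHomotopic I τ₀ τ₁ → ce.Over q τ₀ → ce.Over (d τ₀ τ₁ q) τ₁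
  equivariant : ∀ τ₀ τ₁ (z : Circle) q, ThinHomotopic I τ₀ τ₁ → ce.Over q τ₀ →
    d τ₀ τ₁ (ce.emb z * q) = ce.emb z * d τ₀ τ₁ q
  bijOn : ∀ τ₀ τ₁, ThinHomotopic I τ₀ τ₁ →
    Set.BijOn (d τ₀ τ₁) {q | ce.Over q τ₀} {q | ce.Over q τ₁}
  cocycle : ∀ τ₀ τ₁ τ₂ q, ThinHomotopic I τ₀ τ₁ → ThinHomotopic I τ₁ τ₂ →
    ThinHomotopic I τ₀ τ₂ → ce.Over q τ₀ →
    d τ₁ τ₂ (d τ₀ τ₁ q) = d τ₀ τ₂ q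

/-- A thin homotopy equivariant structure is multiplicative if it is compatible with the group
structures, for pairs of loops joined by a thin path in `L(G × G)`. -/
def ThinStructure.Multiplicative {ce : CentralExt I G L} (ds : ThinStructure ce) : Prop :=
  ∀ τ₀ γ₀ τ₁ γ₁ q q',
    ThinHomotopic (I.prod I) (fun z => (τ₀ z, γ₀ z)) (fun z => (τ₁ z, γ₁ z)) →
    ce.Over q τ₀ → ce.Over q' γ₀ →
    ds.d (τ₀ * γ₀) (τ₁ * γ₁) (q * q') = ds.d τ₀ τ₁ q * ds.d γ₀ γ₁ q'

/-- Compatibility of a thin homotopy equivariant structure with a fusion product. -/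
def FusCompatible {ce : CentralExt I G L} (lam : FusionProduct ce) (ds : ThinStructure ce) :
    Prop :=
  ∀ (Γ₁ Γ₂ Γ₃ : ℝ → ℝ → G) q₁₂ q₂₃,
    (∀ t, IsTriple I (Γ₁ t) (Γ₂ t) (Γ₃ t)) →
    IsThinHomotopy I (fun p => chordFn (Γ₁ p.1) (Γ₂ p.1) p.2) →
    IsThinHomotopy I (fun p => chordFn (Γ₂ p.1) (Γ₃ p.1) p.2) →
    IsThinHomotopy I (fun p => chordFn (Γ₁ p.1) (Γ₃ p.1) p.2) →
    ce.Over q₁₂ (chordFn (Γ₁ 0) (Γ₂ 0)) → ce.Over q₂₃ (chordFn (Γ₂ 0) (Γ₃ 0)) →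
    ds.d (chordFn (Γ₁ 0) (Γ₃ 0)) (chordFn (Γ₁ 1) (Γ₃ 1)) (lam.fus (Γ₁ 0) (Γ₂ 0) (Γ₃ 0) q₁₂ q₂₃) =
      lam.fus (Γ₁ 1) (Γ₂ 1) (Γ₃ 1)
        (ds.d (chordFn (Γ₁ 0) (Γ₂ 0)) (chordFn (Γ₁ 1) (Γ₂ 1)) q₁₂)
        (ds.d (chordFn (Γ₂ 0) (Γ₃ 0)) (chordFn (Γ₂ 1) (Γ₃ 1)) q₂₃)

/-- A thin homotopy equivariant structure symmetrizes a fusion product. -/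
def FusSymmetrizes {ce : CentralExt I G L} (lam : FusionProduct ce) (ds : ThinStructure ce) :
    Prop :=
  ∀ γ₁ γ₂ γ₃ q₁₂ q₂₃, IsTriple I γ₁ γ₂ γ₃ →
    ce.Over q₁₂ (chordFn γ₁ γ₂) → ce.Over q₂₃ (chordFn γ₂ γ₃) →
    ds.d (chordFn γ₁ γ₃) (chordFn (revP γ₃) (revP γ₁)) (lam.fus γ₁ γ₂ γ₃ q₁₂ q₂₃) =
      lam.fus (revP γ₃) (revP γ₂) (revP γ₁)
        (ds.d (chordFn γ₂ γ₃) (chordFn (revP γ₃) (revP γ₂)) q₂₃)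
        (ds.d (chordFn γ₁ γ₂) (chordFn (revP γ₂) (revP γ₁)) q₁₂)

/-- Fusive = compatible and symmetrizing. -/
def FusFusive {ce : CentralExt I G L} (lam : FusionProduct ce) (ds : ThinStructure ce) : Prop :=
  FusCompatible lam ds ∧ FusSymmetrizes lam ds

/-- A smoothing map. -/
def IsSmoothingMap (φ : ℝ → ℝ) : Prop :=
  ContDiff ℝ (⊤ : ℕ∞) φ ∧ φ 0 = 0 ∧ φ 1 = 1 ∧
  (∃ ε > 0, (∀ s ≤ ε, φ s = 0) ∧ (∀ s, 1 - ε ≤ s → φ s = 1)) ∧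
  Set.MapsTo φ (Set.Icc 0 1) (Set.Icc 0 1)

end

section Statement5Aux

open Filter Cardinal

private lemma s5rank_le_one {V : Type*} [AddCommGroup V] [Module ℝ V] (A : ℝ →ₗ[ℝ] V) :
    LinearMap.rank A ≤ 1 := by
  have h : LinearMap.range A ≤ Submodule.span ℝ {A 1} := by
    rintro v ⟨x, rfl⟩
    have hx : A x = x • A 1 := by rw [← A.map_smul, smul_eq_mul, mul_one]
    rw [hx]
    exact Submodule.smul_mem _ _ (Submodule.mem_span_singleton_self _)
  calc LinearMap.rank A ≤ Module.rank ℝ (Submodule.span ℝ {A 1}) := Submodule.rank_mono h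
    _ ≤ #({A 1} : Set V) := rank_span_le _
    _ = 1 := Cardinal.mk_singleton _

private lemma s5key_rank {E : Type*} [NormedAddCommGroup E] [NormedSpace ℝ E]
    {H : Type*} [TopologicalSpace H] {G : Type*} [TopologicalSpace G] [ChartedSpace H G]
    {I : ModelWithCorners ℝ E H} {γ : ℝ → G} (hγ : ContMDiff 𝓘(ℝ, ℝ) I (⊤ : ℕ∞) γ)
    {F : ℝ × ℝ → ℝ} (hF : ContDiff ℝ (⊤ : ℕ∞) F) {h : ℝ × ℝ → G} (p : ℝ × ℝ)
    (heq : h =ᶠ[nhds p] fun q => γ (F q)) :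
    ContMDiffAt 𝓘(ℝ, ℝ × ℝ) I (⊤ : ℕ∞) h p ∧
      LinearMap.rank (mfderiv 𝓘(ℝ, ℝ × ℝ) I h p).toLinearMap ≤ 1 := by
  have hFm : ContMDiff 𝓘(ℝ, ℝ × ℝ) 𝓘(ℝ, ℝ) (⊤ : ℕ∞) F := hF.contMDiff
  have hc : ContMDiffAt 𝓘(ℝ, ℝ × ℝ) I (⊤ : ℕ∞) (γ ∘ F) p :=
    (hγ.contMDiffAt).comp p (hFm.contMDiffAt)
  constructor
  · exact hc.congr_of_eventuallyEq heq
  · rw [heq.mfderiv_eq]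
    have hcomp : mfderiv 𝓘(ℝ, ℝ × ℝ) I (γ ∘ F) p
        = (mfderiv 𝓘(ℝ, ℝ) I γ (F p)).comp (mfderiv 𝓘(ℝ, ℝ × ℝ) 𝓘(ℝ, ℝ) F p) :=
      mfderiv_comp p (hγ.mdifferentiableAt (by simp)) (hFm.mdifferentiableAt (by simp))
    show LinearMap.rank (mfderiv 𝓘(ℝ, ℝ × ℝ) I (γ ∘ F) p).toLinearMap ≤ 1
    rw [hcomp]
    calc LinearMap.rank ((mfderiv 𝓘(ℝ, ℝ) I γ (F p)).comp
          (mfderiv 𝓘(ℝ, ℝ × ℝ) 𝓘(ℝ, ℝ) F p)).toLinearMap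
        ≤ LinearMap.rank (mfderiv 𝓘(ℝ, ℝ) I γ (F p)).toLinearMap := by
          exact LinearMap.rank_comp_le_left _ _
      _ ≤ 1 := s5rank_le_one _

/-- First interpolation parameter. -/
noncomputable def s5A (u : ℝ) : ℝ := Real.smoothTransition (3 * u)

/-- Second interpolation parameter. -/
noncomputable def s5B (u : ℝ) : ℝ := Real.smoothTransition (3 * u - 2)

/-- The two-stage reparametrization homotopy. -/
noncomputable def s5psi (t : ℝ) (φ : ℝ → ℝ) (u s : ℝ) : ℝ :=
  (1 - s5A u) * s + s5A u * (1 - s5B u * (1 - t)) * φ s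

private lemma s5A_nonneg (u : ℝ) : 0 ≤ s5A u := Real.smoothTransition.nonneg _
private lemma s5A_le_one (u : ℝ) : s5A u ≤ 1 := Real.smoothTransition.le_one _
private lemma s5B_nonneg (u : ℝ) : 0 ≤ s5B u := Real.smoothTransition.nonneg _
private lemma s5B_le_one (u : ℝ) : s5B u ≤ 1 := Real.smoothTransition.le_one _

private lemma s5A_zero : s5A 0 = 0 := by
  unfold s5A
  rw [Real.smoothTransition.zero_of_nonpos (by norm_num)]

private lemma s5A_one : s5A 1 = 1 := by
  unfold s5A
  rw [Real.smoothTransition.one_of_one_le (by norm_num)]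

private lemma s5A_eq_one {u : ℝ} (h : 2 / 3 < u) : s5A u = 1 := by
  unfold s5A
  rw [Real.smoothTransition.one_of_one_le (by linarith)]

private lemma s5B_eq_zero {u : ℝ} (h : u ≤ 2 / 3) : s5B u = 0 := by
  unfold s5B
  rw [Real.smoothTransition.zero_of_nonpos (by linarith)]

private lemma s5B_one : s5B 1 = 1 := by
  unfold s5B
  rw [Real.smoothTransition.one_of_one_le (by norm_num)]

private lemma s5A_contDiff : ContDiff ℝ (⊤ : ℕ∞) s5A :=
  Real.smoothTransition.contDiff.comp (contDiff_const.mul contDiff_id)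

private lemma s5B_contDiff : ContDiff ℝ (⊤ : ℕ∞) s5B :=
  Real.smoothTransition.contDiff.comp ((contDiff_const.mul contDiff_id).sub contDiff_const)

private lemma s5psi_contDiff (t : ℝ) {φ : ℝ → ℝ} (hφ : ContDiff ℝ (⊤ : ℕ∞) φ) :
    ContDiff ℝ (⊤ : ℕ∞) (fun p : ℝ × ℝ => s5psi t φ p.1 p.2) := by
  unfold s5psi
  exact ((contDiff_const.sub (s5A_contDiff.comp contDiff_fst)).mul contDiff_snd).add
    (((s5A_contDiff.comp contDiff_fst).mul
      (contDiff_const.sub ((s5B_contDiff.comp contDiff_fst).mul contDiff_const))).mul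
      (hφ.comp contDiff_snd))

private lemma s5psi_zero (t : ℝ) (φ : ℝ → ℝ) (s : ℝ) : s5psi t φ 0 s = s := by
  simp [s5psi, s5A_zero]

private lemma s5psi_one (t : ℝ) (φ : ℝ → ℝ) (s : ℝ) : s5psi t φ 1 s = t * φ s := by
  simp only [s5psi, s5A_one, s5B_one]
  ring

end Statement5Aux

set_option maxHeartbeats 2000000 in
/-- The canonical fusion-idempotent section `can` is retraction-invariant:
for every path `γ`, smoothing map `φ` and `t ∈ [0,1]`, the flat loops `♭(γ)` and `♭(φ_γ(t))`
are thin homotopic, and `can_{φ_γ(t)} = d_{♭(γ),♭(φ_γ(t))}(can_γ)`. -/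
theorem statement5
    {E : Type*} [NormedAddCommGroup E] [NormedSpace ℝ E] [FiniteDimensional ℝ E]
    {H : Type*} [TopologicalSpace H] {G : Type*} [TopologicalSpace G] [ChartedSpace H G]
    [Group G] {I : ModelWithCorners ℝ E H} [LieGroup I (⊤ : ℕ∞) G] {L : Type*} [Group L]
    (ce : CentralExt I G L) (lam : FusionProduct ce) (hmul : lam.Multiplicative)
    (ds : ThinStructure ce) (hfus : FusFusive lam ds)
    (can : (ℝ → G) → L)
    (hsec : ∀ γ, IsSmoothPath I γ → ce.Over (can γ) (chordFn γ γ))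
    (hidem : ∀ γ, IsSmoothPath I γ → lam.fus γ γ γ (can γ) (can γ) = can γ) :
    ∀ (γ : ℝ → G) (φ : ℝ → ℝ) (t : ℝ), IsSmoothPath I γ → IsSmoothingMap φ →
      t ∈ Set.Icc (0:ℝ) 1 →
      ThinHomotopic I (chordFn γ γ)
        (chordFn (fun s => γ (t * φ s)) (fun s => γ (t * φ s))) ∧
      can (fun s => γ (t * φ s)) =
        ds.d (chordFn γ γ) (chordFn (fun s => γ (t * φ s)) (fun s => γ (t * φ s)))
          (can γ) := by
  intro γ φ t hγ hφ ht
  obtain ⟨hγsm, εγ, hεγ, hγ0, hγ1⟩ := id hγ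
  obtain ⟨hφsm, hφzero, hφone, ⟨εφ, hεφ, hφ0, hφ1⟩, -⟩ := id hφ
  set δ : ℝ := min εγ εφ with hδdef
  have hδpos : 0 < δ := lt_min hεγ hεφ
  have hδγ : δ ≤ εγ := min_le_left _ _
  have hδφ : δ ≤ εφ := min_le_right _ _
  set ψ : ℝ → ℝ → ℝ := s5psi t φ with hψdef
  set Γ : ℝ → ℝ → G := fun u s => γ (ψ u s) with hΓdef
  have hγpath : IsSmoothPath I γ := hγ
  -- sitting near 0
  have L2 : ∀ u s, s ≤ δ → γ (ψ u s) = γ 0 := by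
    intro u s hs
    have hφs : φ s = 0 := hφ0 s (le_trans hs hδφ)
    have hval : ψ u s = (1 - s5A u) * s := by
      simp [hψdef, s5psi, hφs]
    rw [hval]
    apply hγ0
    rcases le_or_gt s 0 with h | h
    · nlinarith [s5A_le_one u, s5A_nonneg u]
    · nlinarith [s5A_le_one u, s5A_nonneg u]
  -- value at 1
  have hψ1 : ∀ u, ψ u 1 = (1 - s5A u) + s5A u * (1 - s5B u * (1 - t)) := by
    intro u
    simp [hψdef, s5psi, hφone]
  -- sitting near 1
  have L3 : ∀ u s, 1 - δ ≤ s → γ (ψ u s) = γ (ψ u 1) := by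
    intro u s hs
    have hφs : φ s = 1 := hφ1 s (by linarith)
    rcases le_or_gt u (2 / 3) with hu | hu
    · have hB : s5B u = 0 := s5B_eq_zero hu
      have h1 : ψ u 1 = 1 := by rw [hψ1 u, hB]; ring
      have hval : ψ u s = (1 - s5A u) * s + s5A u := by
        simp [hψdef, s5psi, hφs, hB]
      rw [h1, hval]
      apply hγ1
      rcases le_or_gt s 1 with h | h
      · nlinarith [s5A_le_one u, s5A_nonneg u]
      · nlinarith [s5A_le_one u, s5A_nonneg u]
    · have hA : s5A u = 1 := s5A_eq_one hu
      have hval : ψ u s = 1 - s5B u * (1 - t) := by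
        simp [hψdef, s5psi, hφs, hA]
      have h1 : ψ u 1 = 1 - s5B u * (1 - t) := by rw [hψ1 u, hA]; ring
      rw [hval, h1]
  -- smoothness
  have hφsm' : ContDiff ℝ (⊤ : ℕ∞) φ := hφsm.of_le (by simp)
  have hψsm : ContDiff ℝ (⊤ : ℕ∞) (fun p : ℝ × ℝ => ψ p.1 p.2) := by
    rw [hψdef]; exact s5psi_contDiff t hφsm'
  -- each slice is a smooth path
  have hpathu : ∀ u, IsSmoothPath I (Γ u) := by
    intro u
    constructor
    · have hs : ContDiff ℝ (⊤ : ℕ∞) (fun s : ℝ => ψ u s) :=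
        hψsm.comp ((contDiff_const (c := u)).prodMk contDiff_id)
      exact hγsm.comp hs.contMDiff
    · refine ⟨δ, hδpos, fun s hs => ?_, fun s hs => ?_⟩
      · show γ (ψ u s) = γ (ψ u 0)
        have h0 : ψ u 0 = 0 := by simp [hψdef, s5psi, hφzero]
        rw [h0, L2 u s hs]
      · exact L3 u s hs
  -- pointwise description of the homotopy
  have hpt : ∀ u z, chordFn (Γ u) (Γ u) z =
      γ (if Int.fract z ≤ 1 / 2 then ψ u (2 * Int.fract z) else ψ u (2 - 2 * Int.fract z)) := by
    intro u z
    simp only [chordFn, hΓdef]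
    split_ifs <;> rfl
  -- the local analysis
  have main : ∀ p : ℝ × ℝ,
      ContMDiffAt 𝓘(ℝ, ℝ × ℝ) I (⊤ : ℕ∞) (fun p : ℝ × ℝ => chordFn (Γ p.1) (Γ p.1) p.2) p ∧
      LinearMap.rank (mfderiv 𝓘(ℝ, ℝ × ℝ) I
        (fun p : ℝ × ℝ => chordFn (Γ p.1) (Γ p.1) p.2) p).toLinearMap ≤ 1 := by
    rintro ⟨u₀, z₀⟩
    set n : ℤ := ⌊z₀⌋ with hn
    have hfr : Int.fract z₀ = z₀ - n := (Int.self_sub_floor z₀).symm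
    have hρpos : (0 : ℝ) < min (δ / 2) (1 / 4) := lt_min (by linarith) (by norm_num)
    set ρ : ℝ := min (δ / 2) (1 / 4) with hρdef
    have hρδ : 2 * ρ ≤ δ := by
      have := min_le_left (δ / 2) (1 / 4); linarith [hρdef ▸ this]
    have hρ4 : ρ ≤ 1 / 4 := min_le_right _ _
    rcases lt_trichotomy (Int.fract z₀) (1 / 2) with hlt | heq2 | hgt
    · rcases eq_or_lt_of_le (Int.fract_nonneg z₀) with h0 | hpos
      · -- fract z₀ = 0 : locally constant
        have hz₀ : z₀ = n := by rw [← h0] at hfr; linarith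
        refine s5key_rank hγsm (F := fun _ => (0 : ℝ)) contDiff_const _ ?_
        apply Filter.eventuallyEq_of_mem
          (prod_mem_nhds Filter.univ_mem
            (Ioo_mem_nhds (by linarith : z₀ - ρ < z₀) (by linarith : z₀ < z₀ + ρ)))
        rintro ⟨u, z⟩ ⟨-, hz⟩
        simp only [Set.mem_Ioo] at hz
        show chordFn (Γ u) (Γ u) z = γ 0
        rw [hpt u z]
        rcases le_or_gt (n : ℝ) z with hge | hltz
        · have hfl : ⌊z⌋ = n := by
            rw [Int.floor_eq_iff]
            constructor
            · exact hge
            · push_cast; nlinarith [hz.2]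
          have hfz : Int.fract z = z - n := by
            rw [← Int.self_sub_floor, hfl]
          rw [hfz, if_pos (by nlinarith [hz.2] : z - (n : ℝ) ≤ 1 / 2)]
          exact L2 u _ (by nlinarith [hz.2])
        · have hfl : ⌊z⌋ = n - 1 := by
            rw [Int.floor_eq_iff]
            push_cast
            constructor
            · nlinarith [hz.1]
            · linarith
          have hfz : Int.fract z = z - ((n : ℝ) - 1) := by
            rw [← Int.self_sub_floor, hfl]; push_cast; ring
          rw [hfz, if_neg (by push_cast; nlinarith [hz.1] : ¬(z - ((n : ℝ) - 1) ≤ 1 / 2))]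
          exact L2 u _ (by nlinarith [hz.1])
      · -- 0 < fract z₀ < 1/2
        refine s5key_rank hγsm
          (F := fun q : ℝ × ℝ => ψ q.1 (2 * (q.2 - (n : ℝ))))
          (hψsm.comp (contDiff_fst.prodMk
            (contDiff_const.mul (contDiff_snd.sub contDiff_const)))) _ ?_
        apply Filter.eventuallyEq_of_mem
          (prod_mem_nhds Filter.univ_mem
            (Ioo_mem_nhds (by linarith : (n : ℝ) < z₀) (by linarith : z₀ < (n : ℝ) + 1 / 2)))
        rintro ⟨u, z⟩ ⟨-, hz⟩
        simp only [Set.mem_Ioo] at hz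
        show chordFn (Γ u) (Γ u) z = γ (ψ u (2 * (z - (n : ℝ))))
        have hfl : ⌊z⌋ = n := by
          rw [Int.floor_eq_iff]
          exact ⟨le_of_lt hz.1, by push_cast; linarith [hz.2]⟩
        have hfz : Int.fract z = z - n := by rw [← Int.self_sub_floor, hfl]
        rw [hpt u z, hfz, if_pos (by linarith [hz.2] : z - (n : ℝ) ≤ 1 / 2)]
    · -- fract z₀ = 1/2 : locally depends only on u
      have hz₀ : z₀ = (n : ℝ) + 1 / 2 := by rw [heq2] at hfr; linarith
      refine s5key_rank hγsm (F := fun q : ℝ × ℝ => ψ q.1 1)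
        (hψsm.comp (contDiff_fst.prodMk contDiff_const)) _ ?_
      apply Filter.eventuallyEq_of_mem
        (prod_mem_nhds Filter.univ_mem
          (Ioo_mem_nhds (by linarith : z₀ - ρ < z₀) (by linarith : z₀ < z₀ + ρ)))
      rintro ⟨u, z⟩ ⟨-, hz⟩
      simp only [Set.mem_Ioo] at hz
      show chordFn (Γ u) (Γ u) z = γ (ψ u 1)
      have hfl : ⌊z⌋ = n := by
        rw [Int.floor_eq_iff]
        constructor
        · push_cast; nlinarith [hz.1]
        · push_cast; nlinarith [hz.2]
      have hfz : Int.fract z = z - n := by rw [← Int.self_sub_floor, hfl]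
      rw [hpt u z, hfz]
      split_ifs with hc
      · exact L3 u _ (by nlinarith [hz.1])
      · exact L3 u _ (by nlinarith [hz.2])
    · -- 1/2 < fract z₀ < 1
      have hlt1 : Int.fract z₀ < 1 := Int.fract_lt_one z₀
      refine s5key_rank hγsm
        (F := fun q : ℝ × ℝ => ψ q.1 (2 - 2 * (q.2 - (n : ℝ))))
        (hψsm.comp (contDiff_fst.prodMk
          (contDiff_const.sub (contDiff_const.mul (contDiff_snd.sub contDiff_const))))) _ ?_
      apply Filter.eventuallyEq_of_mem
        (prod_mem_nhds Filter.univ_mem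
          (Ioo_mem_nhds (by linarith : (n : ℝ) + 1 / 2 < z₀) (by linarith : z₀ < (n : ℝ) + 1)))
      rintro ⟨u, z⟩ ⟨-, hz⟩
      simp only [Set.mem_Ioo] at hz
      show chordFn (Γ u) (Γ u) z = γ (ψ u (2 - 2 * (z - (n : ℝ))))
      have hfl : ⌊z⌋ = n := by
        rw [Int.floor_eq_iff]
        constructor
        · push_cast; linarith [hz.1]
        · push_cast; linarith [hz.2]
      have hfz : Int.fract z = z - n := by rw [← Int.self_sub_floor, hfl]
      rw [hpt u z, hfz, if_neg (by push_cast; linarith [hz.1] : ¬(z - (n : ℝ) ≤ 1 / 2))]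
  -- the thin homotopy
  have hthinh : IsThinHomotopy I (fun p : ℝ × ℝ => chordFn (Γ p.1) (Γ p.1) p.2) := by
    refine ⟨fun p => (main p).1, ?_, fun p _ => (main p).2⟩
    intro u z
    show chordFn (Γ u) (Γ u) (z + 1) = chordFn (Γ u) (Γ u) z
    simp only [chordFn, Int.fract_add_one]
  have hΓ0 : Γ 0 = γ := by
    funext s
    simp only [hΓdef, hψdef, s5psi_zero]
  set γ' : ℝ → G := fun s => γ (t * φ s) with hγ'def
  have hΓ1 : Γ 1 = γ' := by
    funext s
    simp only [hΓdef, hψdef, hγ'def, s5psi_one]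
  have hth : ThinHomotopic I (chordFn γ γ) (chordFn γ' γ') := by
    refine ⟨fun p : ℝ × ℝ => chordFn (Γ p.1) (Γ p.1) p.2, hthinh, fun z => ?_, fun z => ?_⟩
    · show chordFn (Γ 0) (Γ 0) z = chordFn γ γ z
      rw [hΓ0]
    · show chordFn (Γ 1) (Γ 1) z = chordFn γ' γ' z
      rw [hΓ1]
  refine ⟨hth, ?_⟩
  -- algebraic part
  have hγ'path : IsSmoothPath I γ' := by rw [← hΓ1]; exact hpathu 1
  have htrip' : IsTriple I γ' γ' γ' := ⟨hγ'path, hγ'path, hγ'path, ⟨rfl, rfl⟩, ⟨rfl, rfl⟩⟩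
  have htripΓ : ∀ u, IsTriple I (Γ u) (Γ u) (Γ u) :=
    fun u => ⟨hpathu u, hpathu u, hpathu u, ⟨rfl, rfl⟩, ⟨rfl, rfl⟩⟩
  have hover : ce.Over (can γ) (chordFn (Γ 0) (Γ 0)) := by rw [hΓ0]; exact hsec γ hγpath
  have hkey := hfus.1 Γ Γ Γ (can γ) (can γ) htripΓ hthinh hthinh hthinh hover hover
  rw [hΓ0, hΓ1, hidem γ hγpath] at hkey
  set q : L := ds.d (chordFn γ γ) (chordFn γ' γ') (can γ) with hqdef
  -- hkey : q = lam.fus γ' γ' γ' q q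
  have hqover : ce.Over q (chordFn γ' γ') := ds.over' _ _ _ hth (hsec γ hγpath)
  have hcov : ce.Over (can γ') (chordFn γ' γ') := hsec γ' hγ'path
  have hprojeq : ce.proj (can γ') = ce.proj q := Subtype.ext (hcov.trans hqover.symm)
  have hker : ce.proj (can γ' * q⁻¹) = 1 := by
    rw [map_mul, map_inv, hprojeq, mul_inv_cancel]
  obtain ⟨z, hz⟩ := (ce.mem_ker_iff _).mp hker
  have hcan_eq : can γ' = ce.emb z * q := by rw [hz, inv_mul_cancel_right]
  have hprojz : ce.proj (ce.emb z) = 1 := (ce.mem_ker_iff _).mpr ⟨z, rfl⟩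
  have hzq_over : ce.Over (ce.emb z * q) (chordFn γ' γ') := by
    show (ce.proj (ce.emb z * q)).1 = _
    rw [map_mul, hprojz, one_mul]
    exact hqover
  have h2 : ce.emb z * q = lam.fus γ' γ' γ' (ce.emb z * q) (ce.emb z * q) := by
    rw [← hcan_eq]
    exact (hidem γ' hγ'path).symm
  rw [lam.act_left γ' γ' γ' z q (ce.emb z * q) htrip' hqover hzq_over,
      lam.act_right γ' γ' γ' z q q htrip' hqover hqover, ← hkey] at h2
  have h3 : q = ce.emb z * q := mul_left_cancel h2
  rw [hcan_eq, ← h3]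
end

section
/- Let G be a finite-dimensional Lie group and let L be a central extension of LG by U(1) equipped with a multiplicative fusion product λ. Let τ₁, τ₂ ∈ PG be loops based at 1, i.e. paths with sitting instants satisfying τ_i(0) = τ_i(1) = 1 ∈ G, and let id₁ ∈ PG denote the constant path at 1. Then for all p₁ ∈ L_{τ₁∪id₁} and p₂ ∈ L_{id₁∪τ₂} one has p₁·p₂ = λ(p₁, p₂), where λ is the fusion over the triple (τ₁, id₁, τ₂) ∈ PG^[3]. -/
open scoped Manifold
open Function Set

/-- For loops `τ₁, τ₂` based at `1 ∈ G` and elements `p₁` over `τ₁ ∪ id₁`,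
`p₂` over `id₁ ∪ τ₂`, the product in a central extension with multiplicative fusion product
coincides with the fusion product: `p₁ · p₂ = λ(p₁, p₂)`. -/
theorem statement7
    {E : Type*} [NormedAddCommGroup E] [NormedSpace ℝ E] [FiniteDimensional ℝ E]
    {H : Type*} [TopologicalSpace H] {G : Type*} [TopologicalSpace G] [ChartedSpace H G]
    [Group G] {I : ModelWithCorners ℝ E H} [LieGroup I (⊤ : ℕ∞) G] {L : Type*} [Group L]
    (ce : CentralExt I G L) (lam : FusionProduct ce) (hmul : lam.Multiplicative)
    (τ₁ τ₂ : ℝ → G) (h₁ : IsSmoothPath I τ₁) (h₂ : IsSmoothPath I τ₂)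
    (hb₁₀ : τ₁ 0 = 1) (hb₁₁ : τ₁ 1 = 1) (hb₂₀ : τ₂ 0 = 1) (hb₂₁ : τ₂ 1 = 1)
    (p₁ p₂ : L)
    (hp₁ : ce.Over p₁ (chordFn τ₁ (fun _ => (1 : G))))
    (hp₂ : ce.Over p₂ (chordFn (fun _ => (1 : G)) τ₂)) :
    p₁ * p₂ = lam.fus τ₁ (fun _ => (1 : G)) τ₂ p₁ p₂ := by
  set c : ℝ → G := fun _ => (1 : G) with hc
  -- basic function equalities
  have hcc : chordFn c c = c := by
    funext t; simp [chordFn, c]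
  have hccmul : c * c = c := by funext t; exact mul_one _
  have hτ₁c : τ₁ * c = τ₁ := by funext t; exact mul_one _
  have hcτ₂ : c * τ₂ = τ₂ := by funext t; exact one_mul _
  -- constant path is a smooth path
  have hspc : IsSmoothPath I c := by
    refine ⟨contMDiff_const, 1/2, by norm_num, fun _ _ => rfl, fun _ _ => rfl⟩
  have hsec : SameEnds c c := ⟨rfl, rfl⟩
  have hse₁ : SameEnds τ₁ c := ⟨hb₁₀, hb₁₁⟩
  have hse₂ : SameEnds c τ₂ := ⟨hb₂₀.symm, hb₂₁.symm⟩
  have hTc : IsTriple I c c c := ⟨hspc, hspc, hspc, hsec, hsec⟩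
  have hT1 : IsTriple I τ₁ c c := ⟨h₁, hspc, hspc, hse₁, hsec⟩
  have hT2 : IsTriple I c c τ₂ := ⟨hspc, hspc, h₂, hsec, hse₂⟩
  have hT12 : IsTriple I τ₁ c τ₂ := ⟨h₁, hspc, h₂, hse₁, hse₂⟩
  -- the identity of L lies over the constant loop
  have o1 : ce.Over (1 : L) (chordFn c c) := by
    show (ce.proj 1).1 = chordFn c c
    rw [map_one, hcc]
    rfl
  -- the element u = λ(1,1) is idempotent, hence 1
  set u : L := lam.fus c c c 1 1 with hu
  have hu1 : u = 1 := by
    have h := hmul c c c c c c 1 1 1 1 hTc hTc o1 o1 o1 o1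
    rw [hccmul, one_mul] at h
    exact mul_left_cancel (h.trans (mul_one u).symm)
  -- Step 1 : a := λ(p₁, 1) equals p₁
  set a : L := lam.fus τ₁ c c p₁ 1 with ha
  have hoa : ce.Over a (chordFn τ₁ c) := lam.over' τ₁ c c p₁ 1 hT1 hp₁ o1
  have hproja : ce.proj a = ce.proj p₁ := Subtype.ext (hoa.trans hp₁.symm)
  have hker : ce.proj (a * p₁⁻¹) = 1 := by
    rw [map_mul, map_inv, hproja, mul_inv_cancel]
  obtain ⟨z, hz⟩ := (ce.mem_ker_iff _).mp hker
  have haz : a = ce.emb z * p₁ := by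
    rw [hz, inv_mul_cancel_right]
  have hFa : lam.fus τ₁ c c a 1 = a := by
    have h := lam.assoc τ₁ c c c p₁ 1 1 h₁ hspc hspc hspc hse₁ hsec hsec hp₁ o1 o1
    rw [← hu, hu1] at h
    exact h
  have hFa' : lam.fus τ₁ c c a 1 = ce.emb z * a := by
    conv_lhs => rw [haz]
    rw [lam.act_left τ₁ c c z p₁ 1 hT1 hp₁ o1, ← ha]
  have hz1 : ce.emb z = 1 := by
    have h : ce.emb z * a = (1 : L) * a := by rw [one_mul]; exact hFa'.symm.trans hFa
    exact mul_right_cancel h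
  have hap : a = p₁ := by rw [haz, hz1, one_mul]
  -- Step 2 : b := λ(1, p₂) equals p₂
  set b : L := lam.fus c c τ₂ 1 p₂ with hb
  have hob : ce.Over b (chordFn c τ₂) := lam.over' c c τ₂ 1 p₂ hT2 o1 hp₂
  have hprojb : ce.proj b = ce.proj p₂ := Subtype.ext (hob.trans hp₂.symm)
  have hkerb : ce.proj (b * p₂⁻¹) = 1 := by
    rw [map_mul, map_inv, hprojb, mul_inv_cancel]
  obtain ⟨w, hw⟩ := (ce.mem_ker_iff _).mp hkerb
  have hbw : b = ce.emb w * p₂ := by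
    rw [hw, inv_mul_cancel_right]
  have hGb : lam.fus c c τ₂ 1 b = b := by
    have h := lam.assoc c c c τ₂ 1 1 p₂ hspc hspc hspc h₂ hsec hsec hse₂ o1 o1 hp₂
    rw [← hu, hu1] at h
    exact h.symm
  have hGb' : lam.fus c c τ₂ 1 b = ce.emb w * b := by
    conv_lhs => rw [hbw]
    rw [lam.act_right c c τ₂ w 1 p₂ hT2 o1 hp₂, ← hb]
  have hw1 : ce.emb w = 1 := by
    have h : ce.emb w * b = (1 : L) * b := by rw [one_mul]; exact hGb'.symm.trans hGb
    exact mul_right_cancel h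
  have hbp : b = p₂ := by rw [hbw, hw1, one_mul]
  -- Step 3 : multiplicativity
  have h := hmul τ₁ c c c c τ₂ p₁ 1 1 p₂ hT1 hT2 hp₁ o1 o1 hp₂
  rw [hτ₁c, hccmul, hcτ₂, mul_one, one_mul] at h
  calc p₁ * p₂ = a * b := by rw [hap, hbp]
    _ = lam.fus τ₁ c τ₂ p₁ p₂ := h
end

section
/- Let G be a finite-dimensional Lie group and let L be a central extension of LG by U(1) equipped with a multiplicative fusion product λ and a multiplicative thin homotopy equivariant structure d that is fusive with respect to λ. Let τ₁, τ₂ ∈ PG be loops based at 1, i.e. paths with sitting instants satisfying τ_i(0) = τ_i(1) = 1 ∈ G, and let id₁ ∈ PG denote the constant path at 1. Then p₁·p₂ = p₂·p₁ for all p₁ ∈ L_{τ₁∪id₁} and p₂ ∈ L_{id₁∪τ₂}. -/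
open scoped Manifold
open Function Set

/-- In a central extension of `LG` with a multiplicative fusion product and a
multiplicative, fusive thin homotopy equivariant structure, elements over the loops `τ₁ ∪ id₁`
and `id₁ ∪ τ₂` (for `τ₁, τ₂` based at `1`) commute. -/
theorem statement8
    {E : Type*} [NormedAddCommGroup E] [NormedSpace ℝ E] [FiniteDimensional ℝ E]
    {H : Type*} [TopologicalSpace H] {G : Type*} [TopologicalSpace G] [ChartedSpace H G]
    [Group G] {I : ModelWithCorners ℝ E H} [LieGroup I (⊤ : ℕ∞) G] {L : Type*} [Group L]
    (ce : CentralExt I G L) (lam : FusionProduct ce) (ds : ThinStructure ce)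
    (hlmul : lam.Multiplicative) (hdmul : ds.Multiplicative) (hfus : FusFusive lam ds)
    (τ₁ τ₂ : ℝ → G) (h₁ : IsSmoothPath I τ₁) (h₂ : IsSmoothPath I τ₂)
    (hb₁₀ : τ₁ 0 = 1) (hb₁₁ : τ₁ 1 = 1) (hb₂₀ : τ₂ 0 = 1) (hb₂₁ : τ₂ 1 = 1)
    (p₁ p₂ : L)
    (hp₁ : ce.Over p₁ (chordFn τ₁ (fun _ => (1 : G))))
    (hp₂ : ce.Over p₂ (chordFn (fun _ => (1 : G)) τ₂)) :
    p₁ * p₂ = p₂ * p₁ := by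
  classical
  -- constant path at 1
  have hpath1 : IsSmoothPath I (fun _ : ℝ => (1 : G)) :=
    ⟨contMDiff_const, 1/2, by norm_num, fun _ _ => rfl, fun _ _ => rfl⟩
  have hchord11 : chordFn (fun _ : ℝ => (1 : G)) (fun _ : ℝ => (1 : G)) =
      fun _ : ℝ => (1 : G) := by
    funext t; unfold chordFn; split_ifs <;> rfl
  have hover1 : ce.Over 1 (chordFn (fun _ : ℝ => (1 : G)) (fun _ : ℝ => (1 : G))) := by
    rw [hchord11]
    show (ce.proj 1).1 = _
    rw [map_one]
    rfl
  have htr1 : IsTriple I τ₁ (fun _ => 1) (fun _ => 1) :=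
    ⟨h₁, hpath1, hpath1, ⟨hb₁₀, hb₁₁⟩, ⟨rfl, rfl⟩⟩
  have htr2 : IsTriple I (fun _ => 1) (fun _ => 1) τ₂ :=
    ⟨hpath1, hpath1, h₂, ⟨rfl, rfl⟩, ⟨hb₂₀.symm, hb₂₁.symm⟩⟩
  have hM1 := hlmul τ₁ (fun _ => 1) (fun _ => 1) (fun _ => 1) (fun _ => 1) τ₂ p₁ 1 1 p₂
    htr1 htr2 hp₁ hover1 hover1 hp₂
  have hM2 := hlmul (fun _ => 1) (fun _ => 1) τ₂ τ₁ (fun _ => 1) (fun _ => 1) 1 p₂ p₁ 1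
    htr2 htr1 hover1 hp₂ hp₁ hover1
  have e1 : τ₁ * (fun _ : ℝ => (1 : G)) = τ₁ := funext fun _ => mul_one _
  have e2 : (fun _ : ℝ => (1 : G)) * τ₁ = τ₁ := funext fun _ => one_mul _
  have e3 : (fun _ : ℝ => (1 : G)) * (fun _ : ℝ => (1 : G)) = (fun _ : ℝ => (1 : G)) :=
    funext fun _ => mul_one _
  have e4 : (fun _ : ℝ => (1 : G)) * τ₂ = τ₂ := funext fun _ => one_mul _
  have e5 : τ₂ * (fun _ : ℝ => (1 : G)) = τ₂ := funext fun _ => mul_one _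
  rw [e1, e3, e4, mul_one, one_mul] at hM1
  rw [e2, e3, e5, mul_one, one_mul] at hM2
  set A := lam.fus τ₁ (fun _ => 1) (fun _ => 1) p₁ 1 with hA'
  set B := lam.fus (fun _ => 1) (fun _ => 1) τ₂ 1 p₂ with hB'
  have hab : A * B = B * A := hM1.trans hM2.symm
  -- A and B differ from p₁, p₂ by central elements
  have key : ∀ (a q : L) (f : ℝ → G), ce.Over a f → ce.Over q f →
      ∃ z : Circle, a = ce.emb z * q := by
    intro a q f ha hq
    have hproj : ce.proj a = ce.proj q := Subtype.ext (ha.trans hq.symm)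
    have hk : ce.proj (a * q⁻¹) = 1 := by rw [map_mul, map_inv, hproj, mul_inv_cancel]
    obtain ⟨z, hz⟩ := (ce.mem_ker_iff _).mp hk
    exact ⟨z, by rw [hz, inv_mul_cancel_right]⟩
  have hAov : ce.Over A (chordFn τ₁ (fun _ => 1)) := lam.over' _ _ _ _ _ htr1 hp₁ hover1
  have hBov : ce.Over B (chordFn (fun _ => 1) τ₂) := lam.over' _ _ _ _ _ htr2 hover1 hp₂
  obtain ⟨z₁, hz₁⟩ := key A p₁ _ hAov hp₁
  obtain ⟨z₂, hz₂⟩ := key B p₂ _ hBov hp₂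
  rw [hz₁, hz₂] at hab
  have c : ∀ (z : Circle) (x y : L), x * (ce.emb z * y) = ce.emb z * (x * y) := by
    intro z x y; rw [← mul_assoc, ← ce.central, mul_assoc]
  have l1 : ce.emb z₁ * p₁ * (ce.emb z₂ * p₂) = ce.emb z₁ * (ce.emb z₂ * (p₁ * p₂)) := by
    rw [mul_assoc, c]
  have l2 : ce.emb z₂ * p₂ * (ce.emb z₁ * p₁) = ce.emb z₁ * (ce.emb z₂ * (p₂ * p₁)) := by
    rw [mul_assoc, c, ← mul_assoc, ← ce.central z₁ (ce.emb z₂), mul_assoc]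
  rw [l1, l2] at hab
  exact mul_left_cancel (mul_left_cancel hab)
end

section
/- Let G be a finite-dimensional Lie group and let L be a central extension of LG by U(1) equipped with a thin homotopy equivariant structure d. Let Diff₀⁺(S¹) denote the group of diffeomorphisms φ of S¹ for which there exists a smooth map Φ : [0,1] × S¹ → S¹ with Φ(0,·) = id_{S¹}, Φ(1,·) = φ, and Φ(t,·) a diffeomorphism for every t. Then: (a) for every τ ∈ LG and φ ∈ Diff₀⁺(S¹), the loops τ and τ∘φ are thin homotopic, so that q·φ := d_{τ, τ∘φ}(q) is defined for q ∈ L_τ; (b) this formula defines a right action of Diff₀⁺(S¹) on L covering the precomposition action of Diff₀⁺(S¹) on LG; (c) if d is multiplicative, then the action is by group homomorphisms of L and fixes every element of L that projects to a constant loop, in particular every element of the central U(1). -/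
open scoped Manifold
open Function Set

/-- A smooth isotopy of (lifts of) orientation-preserving circle diffeomorphisms starting at
the identity: `Φ(t,·)` is the lift of a diffeomorphism of `S¹` for each `t ∈ [0,1]`, and
`Φ(0,·) = id`.  The corresponding element of `Diff₀⁺(S¹)` is `Φ(1,·)`. -/
def IsCircleIsotopy (Φ : ℝ × ℝ → ℝ) : Prop :=
  ContDiff ℝ (⊤ : ℕ∞) Φ ∧ (∀ t z, Φ (t, z + 1) = Φ (t, z) + 1) ∧ (∀ z, Φ (0, z) = z) ∧
  (∀ t ∈ Set.Icc (0:ℝ) 1, Function.Bijective (fun z => Φ (t, z))) ∧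
  (∀ t ∈ Set.Icc (0:ℝ) 1, ∀ z, deriv (fun z => Φ (t, z)) z ≠ 0)

section Aux

universe uE'

variable {E' : Type uE'} [NormedAddCommGroup E'] [NormedSpace ℝ E']
variable {H' : Type*} [TopologicalSpace H']
variable {M : Type*} [TopologicalSpace M] [ChartedSpace H' M]

/-- Any homotopy of the form `(t,z) ↦ τ (F (t,z))`, with `τ` a smooth 1-periodic loop and
`F : ℝ × ℝ → ℝ` smooth satisfying `F (t, z+1) = F (t, z) + 1`, is thin. -/
theorem isThinHomotopy_reparam (I' : ModelWithCorners ℝ E' H') {τ : ℝ → M}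
    (hτ : ContMDiff 𝓘(ℝ, ℝ) I' (⊤ : ℕ∞) τ) (hper : ∀ z, τ (z + 1) = τ z)
    {F : ℝ × ℝ → ℝ} (hF : ContDiff ℝ (⊤ : ℕ∞) F) (hFper : ∀ t z, F (t, z + 1) = F (t, z) + 1) :
    IsThinHomotopy I' (fun p => τ (F p)) := by
  have hFm : ContMDiff 𝓘(ℝ, ℝ × ℝ) 𝓘(ℝ, ℝ) (⊤ : ℕ∞) F := (hF.of_le (by simp)).contMDiff
  refine ⟨hτ.comp hFm, fun t z => by
    show τ (F (t, z + 1)) = τ (F (t, z)); rw [hFper t z, hper], fun p _ => ?_⟩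
  have hcomp : mfderiv 𝓘(ℝ, ℝ × ℝ) I' (fun p => τ (F p)) p =
      (mfderiv 𝓘(ℝ, ℝ) I' τ (F p)).comp (mfderiv 𝓘(ℝ, ℝ × ℝ) 𝓘(ℝ, ℝ) F p) :=
    mfderiv_comp p (hτ.mdifferentiableAt (by simp)) (hFm.mdifferentiableAt (by simp))
  rw [hcomp, ContinuousLinearMap.toLinearMap_comp]
  have hg : LinearMap.rank (mfderiv 𝓘(ℝ, ℝ × ℝ) 𝓘(ℝ, ℝ) F p).toLinearMap ≤ 1 :=
    (LinearMap.rank_le_range _).trans_eq (Module.rank_self ℝ)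
  have h := LinearMap.lift_rank_comp_le_right
    (mfderiv 𝓘(ℝ, ℝ × ℝ) 𝓘(ℝ, ℝ) F p).toLinearMap (mfderiv 𝓘(ℝ, ℝ) I' τ (F p)).toLinearMap
  refine Cardinal.lift_le.mp (h.trans ?_)
  simpa using Cardinal.lift_le.{uE', 0}.mpr hg

theorem thinHomotopic_reparam (I' : ModelWithCorners ℝ E' H') {τ : ℝ → M}
    (hτ : ContMDiff 𝓘(ℝ, ℝ) I' (⊤ : ℕ∞) τ) (hper : ∀ z, τ (z + 1) = τ z)
    {F : ℝ × ℝ → ℝ} (hF : ContDiff ℝ (⊤ : ℕ∞) F) (hFper : ∀ t z, F (t, z + 1) = F (t, z) + 1)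
    {τ₀ τ₁ : ℝ → M} (h0 : ∀ z, τ (F (0, z)) = τ₀ z) (h1 : ∀ z, τ (F (1, z)) = τ₁ z) :
    ThinHomotopic I' τ₀ τ₁ :=
  ⟨fun p => τ (F p), isThinHomotopy_reparam I' hτ hper hF hFper, h0, h1⟩

end Aux

/-- A thin homotopy equivariant structure induces a right action of
`Diff₀⁺(S¹)` on `L` via `q · φ := d_{τ, τ∘φ}(q)`, covering the precomposition action on `LG`;
if `d` is multiplicative, this action is by group homomorphisms and fixes all elements
projecting to constant loops, in particular the central `U(1)`. -/
theorem statement10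
    {E : Type*} [NormedAddCommGroup E] [NormedSpace ℝ E] [FiniteDimensional ℝ E]
    {H : Type*} [TopologicalSpace H] {G : Type*} [TopologicalSpace G] [ChartedSpace H G]
    [Group G] {I : ModelWithCorners ℝ E H} [LieGroup I (⊤ : ℕ∞) G] {L : Type*} [Group L]
    (ce : CentralExt I G L) (ds : ThinStructure ce) :
    -- (a) `τ` and `τ ∘ φ` are thin homotopic, so `q · φ` is defined:
    (∀ (τ : ℝ → G), IsSmoothLoop I τ → ∀ Φ, IsCircleIsotopy Φ →
      ThinHomotopic I τ (fun z => τ (Φ (1, z)))) ∧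
    -- (b) the formula defines a right action covering precomposition:
    (∀ (τ : ℝ → G) (Φ : ℝ × ℝ → ℝ) (q : L), IsSmoothLoop I τ → IsCircleIsotopy Φ →
      ce.Over q τ →
      ce.Over (ds.d τ (fun z => τ (Φ (1, z))) q) (fun z => τ (Φ (1, z)))) ∧
    (∀ (τ : ℝ → G) (q : L), IsSmoothLoop I τ → ce.Over q τ → ds.d τ τ q = q) ∧
    (∀ (τ : ℝ → G) (Φ Ψ : ℝ × ℝ → ℝ) (q : L), IsSmoothLoop I τ →
      IsCircleIsotopy Φ → IsCircleIsotopy Ψ → ce.Over q τ →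
      ds.d (fun z => τ (Φ (1, z))) (fun z => τ (Φ (1, Ψ (1, z))))
          (ds.d τ (fun z => τ (Φ (1, z))) q)
        = ds.d τ (fun z => τ (Φ (1, Ψ (1, z)))) q) ∧
    -- (c) if `d` is multiplicative:
    (ds.Multiplicative →
      -- the action is by group homomorphisms:
      (∀ (τ γ : ℝ → G) (Φ : ℝ × ℝ → ℝ) (q q' : L), IsSmoothLoop I τ → IsSmoothLoop I γ →
        IsCircleIsotopy Φ → ce.Over q τ → ce.Over q' γ →
        ds.d (τ * γ) (fun z => τ (Φ (1, z)) * γ (Φ (1, z))) (q * q')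
          = ds.d τ (fun z => τ (Φ (1, z))) q * ds.d γ (fun z => γ (Φ (1, z))) q') ∧
      -- it fixes every element projecting to a constant loop:
      (∀ (g : G) (q : L), ce.Over q (fun _ => g) → ds.d (fun _ => g) (fun _ => g) q = q) ∧
      -- in particular every element of the central `U(1)`:
      (∀ z : Circle, ds.d (fun _ => (1 : G)) (fun _ => (1 : G)) (ce.emb z) = ce.emb z)) := by
  -- (a)
  have part_a : ∀ (τ : ℝ → G), IsSmoothLoop I τ → ∀ Φ, IsCircleIsotopy Φ →
      ThinHomotopic I τ (fun z => τ (Φ (1, z))) := by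
    intro τ hτ Φ hΦ
    exact thinHomotopic_reparam I hτ.1 hτ.2 hΦ.1 hΦ.2.1
      (fun z => by rw [hΦ.2.2.1 z]) (fun z => rfl)
  have refl_thin : ∀ (τ : ℝ → G), IsSmoothLoop I τ → ThinHomotopic I τ τ := fun τ hτ =>
    thinHomotopic_reparam I (F := fun p => p.2) hτ.1 hτ.2 contDiff_snd
      (fun t z => rfl) (fun z => rfl) (fun z => rfl)
  have part_refl : ∀ (τ : ℝ → G) (q : L), IsSmoothLoop I τ → ce.Over q τ →
      ds.d τ τ q = q := by
    intro τ q hτ hq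
    have ht := refl_thin τ hτ
    have h1 := ds.cocycle τ τ τ q ht ht ht hq
    exact (ds.bijOn τ τ ht).injOn (ds.over' τ τ q ht hq) hq h1
  refine ⟨part_a, ?_, part_refl, ?_, ?_⟩
  · intro τ Φ q hτ hΦ hq
    exact ds.over' τ _ q (part_a τ hτ Φ hΦ) hq
  · intro τ Φ Ψ q hτ hΦ hΨ hq
    have h01 := part_a τ hτ Φ hΦ
    have h12 : ThinHomotopic I (fun z => τ (Φ (1, z))) (fun z => τ (Φ (1, Ψ (1, z)))) :=
      thinHomotopic_reparam I (F := fun p => Φ (1, Ψ p)) hτ.1 hτ.2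
        (hΦ.1.comp (contDiff_const.prodMk hΨ.1))
        (fun t z => by show Φ (1, Ψ (t, z + 1)) = Φ (1, Ψ (t, z)) + 1; rw [hΨ.2.1 t z, hΦ.2.1])
        (fun z => by show τ (Φ (1, Ψ (0, z))) = τ (Φ (1, z)); rw [hΨ.2.2.1 z]) (fun z => rfl)
    have h02 : ThinHomotopic I τ (fun z => τ (Φ (1, Ψ (1, z)))) :=
      thinHomotopic_reparam I (F := fun p => Φ (p.1, Ψ p)) hτ.1 hτ.2
        (hΦ.1.comp (contDiff_fst.prodMk hΨ.1))
        (fun t z => by show Φ (t, Ψ (t, z + 1)) = Φ (t, Ψ (t, z)) + 1; rw [hΨ.2.1 t z, hΦ.2.1])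
        (fun z => by show τ (Φ (0, Ψ (0, z))) = τ z; rw [hΨ.2.2.1 z, hΦ.2.2.1]) (fun z => rfl)
    exact ds.cocycle τ _ _ q h01 h12 h02 hq
  · intro hm
    refine ⟨?_, ?_, ?_⟩
    · intro τ γ Φ q q' hτ hγ hΦ hq hq'
      have hpair : ThinHomotopic (I.prod I) (fun z => (τ z, γ z))
          (fun z => (τ (Φ (1, z)), γ (Φ (1, z)))) :=
        thinHomotopic_reparam (I.prod I) (hτ.1.prodMk hγ.1)
          (fun z => by simp [hτ.2 z, hγ.2 z]) hΦ.1 hΦ.2.1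
          (fun z => by rw [hΦ.2.2.1 z]) (fun z => rfl)
      exact hm τ γ (fun z => τ (Φ (1, z))) (fun z => γ (Φ (1, z))) q q' hpair hq hq'
    · intro g q hq
      exact part_refl (fun _ => g) q ⟨contMDiff_const, fun _ => rfl⟩ hq
    · intro z
      have hov : ce.Over (ce.emb z) (fun _ => (1 : G)) := by
        have h := (ce.mem_ker_iff (ce.emb z)).mpr ⟨z, rfl⟩
        show (ce.proj (ce.emb z)).1 = _
        rw [h]; rfl
      exact part_refl _ _ ⟨contMDiff_const, fun _ => rfl⟩ hov
end
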